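/- arXiv:math/0611808 — 4 statements merged into one kernel-verified Lean document; each statement's English description precedes it below -/
import Mathlib

section
/- Let λ_{n−1} : X_{n−1} → X_{n−2}, …, λ₁ : X₁ → X₀ be composable morphisms in T, let X ∈ {λ₁,…,λ_{n−1}} be an n-filtered object, and let α : Xₙ⟦n−1⟧ → X be any morphism. Then for any distinguished triangle Xₙ⟦n−1⟧ →(α) X → C_α → Xₙ⟦n⟧ on α, the cone C_α admits the structure of an (n+1)-filtered object C_α ∈ {λ₁, …, λ_{n−1}, (σ_X ∘ α)⟦−(n−1)⟧} for the extended sequence in which the new map Xₙ → X_{n−1} is the (−(n−1))-fold shift of σ_X ∘ α. -/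
open CategoryTheory Category Limits Pretriangulated

universe v u

variable (T : Type u) [Category.{v} T] [Preadditive T] [HasZeroObject T]
  [HasShift T ℤ] [∀ n : ℤ, Functor.Additive (shiftFunctor T n)] [Pretriangulated T]

/-- An `n`-filtered object `X ∈ {λ₁, …, λ_{n-1}}` for the sequence of composable maps
`lam j : X (j+1) ⟶ X j` (so that `lam (j-1)` is the map `λ_j : X_j → X_{j-1}`).
It consists of a sequence `0 = F₀X → F₁X → ⋯ → FₙX` together with chosen
distinguished triangles `F_jX ⟶(i_j) F_{j+1}X ⟶(p_{j+1}) X_j⟦j⟧ ⟶(d_j) (F_jX)⟦1⟧`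
for `0 ≤ j ≤ n-1` such that `(p_j⟦1⟧) ∘ d_j = λ_j⟦j⟧` for `1 ≤ j ≤ n-1`.
The field `sig` is the canonical identification `X₀ ≅ F₁X` (inverse to the
isomorphism `p₁ : F₁X ⟶ X₀⟦0⟧`), used to define the map `σ'_X`. -/
structure FilteredObj (n : ℕ) (X : ℕ → T) (lam : ∀ j : ℕ, X (j + 1) ⟶ X j) where
  F : ℕ → T
  isZero_F₀ : IsZero (F 0)
  i : ∀ j : ℕ, F j ⟶ F (j + 1)
  p : ∀ j : ℕ, F (j + 1) ⟶ (X j)⟦(j : ℤ)⟧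
  d : ∀ j : ℕ, (X j)⟦(j : ℤ)⟧ ⟶ (F j)⟦(1 : ℤ)⟧
  dist : ∀ j, j < n → Triangle.mk (i j) (p j) (d j) ∈ distTriang T
  comm : ∀ j : ℕ, j + 2 ≤ n →
    d (j + 1) ≫ (p j)⟦(1 : ℤ)⟧' =
      (lam j)⟦((j + 1 : ℕ) : ℤ)⟧' ≫
        (shiftFunctorAdd' T (j : ℤ) (1 : ℤ) ((j + 1 : ℕ) : ℤ)
          (by push_cast; ring)).hom.app (X j)
  sig : X 0 ⟶ F 1
  sig_p : sig ≫ p 0 = (shiftFunctorZero' T ((0 : ℕ) : ℤ) (by simp)).inv.app (X 0)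

namespace FilteredObj

variable {T}
variable {n : ℕ} {X : ℕ → T} {lam : ∀ j : ℕ, X (j + 1) ⟶ X j}

/-- The composite `F_jX → F_kX` of the maps `i` in a filtered object. -/
def ιLe (E : FilteredObj T n X lam) {j k : ℕ} (h : j ≤ k) : E.F j ⟶ E.F k :=
  Nat.leRecOn (C := fun m => (E.F j ⟶ E.F m)) h (fun {m} g => g ≫ E.i m) (𝟙 (E.F j))

/-- The map `σ'_X : X₀ ≅ F₁X → FₙX` of a filtered object. -/
def sigma' (E : FilteredObj T n X lam) (h : 1 ≤ n) : X 0 ⟶ E.F n :=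
  E.sig ≫ E.ιLe h

end FilteredObj

/-- let `X ∈ {λ₁, …, λ_{n-1}}` be an `n`-filtered object (with `n = m+1`,
encoded as `E`), and let `α : Xₙ⟦n-1⟧ ⟶ X` be any morphism, where `Xₙ = X (m+1)`.
Then for any distinguished triangle `Xₙ⟦n-1⟧ ⟶(α) X ⟶ C_α ⟶ Xₙ⟦n⟧` on `α`, the cone
`C_α` admits the structure of an `(n+1)`-filtered object
`C_α ∈ {λ₁, …, λ_{n-1}, (σ_X ∘ α)⟦-(n-1)⟧}` for the extended sequence in which the
new map `Xₙ → X_{n-1}` is the `(-(n-1))`-fold shift of `σ_X ∘ α` (the hypothesis `hα`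
states that the `(n-1)`-fold shift of the new map `lam m` is `σ_X ∘ α`, where
`σ_X = p m` is the map `FₙX ⟶ X_{n-1}⟦n-1⟧`). -/
theorem cone_filteredObj_of_map_in (m : ℕ) (X : ℕ → T)
    (lam : ∀ j : ℕ, X (j + 1) ⟶ X j)
    (E : FilteredObj T (m + 1) X lam)
    (α : (X (m + 1))⟦(m : ℤ)⟧ ⟶ E.F (m + 1))
    (hα : (lam m)⟦(m : ℤ)⟧' = α ≫ E.p m)
    (Cα : T) (g : E.F (m + 1) ⟶ Cα) (h : Cα ⟶ ((X (m + 1))⟦(m : ℤ)⟧)⟦(1 : ℤ)⟧)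
    (hdist : Triangle.mk α g h ∈ distTriang T) :
    ∃ E' : FilteredObj T (m + 2) X lam, E'.F (m + 2) = Cα := by
  classical
  let F' : ℕ → T := fun j => if j ≤ m + 1 then E.F j else Cα
  have hF1 : ∀ j, j ≤ m + 1 → F' j = E.F j := fun j hj => if_pos hj
  have hF2 : ∀ j, ¬ j ≤ m + 1 → F' j = Cα := fun j hj => if_neg hj
  let e : ((X (m + 1))⟦(m : ℤ)⟧)⟦(1 : ℤ)⟧ ≅ (X (m + 1))⟦((m + 1 : ℕ) : ℤ)⟧ :=
    ((shiftFunctorAdd' T (m : ℤ) (1 : ℤ) ((m + 1 : ℕ) : ℤ)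
      (by push_cast; ring)).app (X (m + 1))).symm
  refine ⟨{ F := F'
            isZero_F₀ := by rw [hF1 0 (by omega)]; exact E.isZero_F₀
            i := fun j =>
              if hj : j + 1 ≤ m + 1 then
                eqToHom (hF1 j (by omega)) ≫ E.i j ≫ eqToHom (hF1 (j + 1) hj).symm
              else if hj' : j ≤ m + 1 then
                eqToHom ((hF1 j hj').trans (by rw [show j = m + 1 by omega])) ≫ g ≫
                  eqToHom (hF2 (j + 1) (by omega)).symm
              else eqToHom ((hF2 j hj').trans (hF2 (j + 1) (by omega)).symm)
            p := fun j =>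
              if hj : j + 1 ≤ m + 1 then eqToHom (hF1 (j + 1) hj) ≫ E.p j
              else if hj' : j = m + 1 then
                eqToHom (hF2 (j + 1) (by omega)) ≫ (-(h ≫ e.hom)) ≫
                  eqToHom (by rw [hj'])
              else 0
            d := fun j =>
              if hj : j ≤ m then E.d j ≫ (eqToHom (hF1 j (by omega)).symm)⟦(1 : ℤ)⟧'
              else if hj' : j = m + 1 then
                eqToHom (by rw [hj']) ≫ (e.inv ≫ α⟦(1 : ℤ)⟧') ≫
                  (eqToHom (((hF1 j (by omega)).trans (by rw [hj'])).symm))⟦(1 : ℤ)⟧'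
              else 0
            dist := ?_
            comm := ?_
            sig := E.sig ≫ eqToHom (hF1 1 (by omega)).symm
            sig_p := ?_ },
          hF2 (m + 2) (by omega)⟩
  · intro j hj
    by_cases hjm : j ≤ m
    · beta_reduce
      rw [dif_pos (show j + 1 ≤ m + 1 by omega), dif_pos (show j + 1 ≤ m + 1 by omega),
        dif_pos hjm]
      refine isomorphic_distinguished _ (E.dist j (by omega)) _ ?_
      dsimp only [Triangle.mk]
      refine Triangle.isoMk _ _ (eqToIso (hF1 j (by omega))) (eqToIso (hF1 (j + 1) (by omega)))
        (Iso.refl _) ?_ ?_ ?_ <;> simp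
    · have hj' : j = m + 1 := by omega
      subst hj'
      beta_reduce
      rw [dif_neg (by omega : ¬ m + 1 + 1 ≤ m + 1), dif_pos (le_refl (m + 1)),
        dif_neg (by omega : ¬ m + 1 + 1 ≤ m + 1), dif_pos rfl,
        dif_neg (by omega : ¬ m + 1 ≤ m), dif_pos rfl]
      refine isomorphic_distinguished _ (rot_of_distTriang _ hdist) _ ?_
      dsimp only [Triangle.mk, Triangle.rotate]
      refine Triangle.isoMk _ _ (eqToIso (hF1 (m + 1) (by omega)))
        (eqToIso (hF2 (m + 2) (by omega)))
        (Iso.mk (-e.inv) (-e.hom) (by simp) (by simp)) ?_ ?_ ?_ <;> simp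
      exact (neg_neg (e.inv ≫ (shiftFunctor T 1).map α)).symm.trans
        (congrArg Neg.neg (Preadditive.comp_neg e.inv ((shiftFunctor T 1).map α)).symm)
  · intro j hj
    by_cases hjm : j + 2 ≤ m + 1
    · beta_reduce
      rw [dif_pos (show j + 1 ≤ m by omega), dif_pos (show j + 1 ≤ m + 1 by omega)]
      have := E.comm j hjm
      simp only [Functor.map_comp, eqToHom_map, assoc, eqToHom_trans, eqToHom_refl, comp_id,
        id_comp, eqToHom_trans_assoc]
      exact this
    · have hj' : m = j := by omega
      subst hj'
      beta_reduce
      rw [dif_neg (by omega : ¬ m + 1 ≤ m), dif_pos rfl,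
        dif_pos (show m + 1 ≤ m + 1 by omega)]
      simp only [Functor.map_comp, eqToHom_map, assoc, eqToHom_trans, eqToHom_refl, comp_id,
        id_comp, eqToHom_trans_assoc, eqToHom_refl]
      rw [← Functor.map_comp, ← hα]
      exact ((shiftFunctorAdd' T (m : ℤ) (1 : ℤ) ((m + 1 : ℕ) : ℤ)
        (by push_cast; ring)).hom.naturality (lam m)).symm
  · beta_reduce
    rw [dif_pos (show 0 + 1 ≤ m + 1 by omega)]
    simp only [assoc, eqToHom_trans_assoc, eqToHom_refl, id_comp]
    exact E.sig_p
end

section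
/- Let U be an n-split full subcategory of T with n ≥ 2, let X_{l−1} →(λ_{l−1}) … →(λ₁) X₀ be a sequence of morphisms between objects of U with 2 ≤ l ≤ n−1, and let X ∈ {λ₁,…,λ_{l−1}} be an l-filtered object. Then for every object Y of U, every morphism Y⟦l⟧ → X is zero and every morphism X → Y⟦−1⟧ is zero. -/
open CategoryTheory Category Limits Pretriangulated

universe v u

variable (T : Type u) [Category.{v} T] [Preadditive T] [HasZeroObject T]
  [HasShift T ℤ] [∀ n : ℤ, Functor.Additive (shiftFunctor T n)] [Pretriangulated T]

/-- A full subcategory of `T`, given by a set `U` of objects, is `n`-split if for all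
objects `X, Y` of `U` and all integers `k`, every morphism `X⟦k⟧ ⟶ Y` is zero unless
`n` divides `k`. -/
def IsNSplit (n : ℕ) (U : Set T) : Prop :=
  ∀ X ∈ U, ∀ Y ∈ U, ∀ k : ℤ, ¬ ((n : ℤ) ∣ k) → ∀ f : X⟦k⟧ ⟶ Y, f = 0

/-- let `U` be an `n`-split full subcategory of `T` with `n ≥ 2`, let
`X_{l-1} ⟶(λ_{l-1}) ⋯ ⟶(λ₁) X₀` be a sequence of maps in `U` with `2 ≤ l ≤ n-1`
and let `X ∈ {λ₁, …, λ_{l-1}}` be an `l`-filtered object. Then for every object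
`Y` of `U`, every morphism `Y⟦l⟧ ⟶ X` is zero and every morphism `X ⟶ Y⟦-1⟧` is
zero. -/
theorem hom_eq_zero_of_filteredObj (n : ℕ) (hn : 2 ≤ n) (U : Set T)
    (hU : IsNSplit T n U)
    (l : ℕ) (hl₂ : 2 ≤ l) (hln : l + 1 ≤ n)
    (X : ℕ → T) (lam : ∀ j : ℕ, X (j + 1) ⟶ X j)
    (hXU : ∀ j, j < l → X j ∈ U)
    (E : FilteredObj T l X lam) (Y : T) (hY : Y ∈ U) :
    (∀ f : Y⟦(l : ℤ)⟧ ⟶ E.F l, f = 0) ∧ (∀ g : E.F l ⟶ Y⟦(-1 : ℤ)⟧, g = 0) := by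
  have hnd : ∀ k : ℤ, 0 < k → k < n → ¬ ((n : ℤ) ∣ k) := fun k hk hlt hd =>
    absurd (Int.le_of_dvd hk hd) (not_le.2 hlt)
  -- every map `Y⟦l⟧ ⟶ X_j⟦j⟧` is zero
  have key1 : ∀ j, j < l → ∀ φ : Y⟦(l : ℤ)⟧ ⟶ (X j)⟦(j : ℤ)⟧, φ = 0 := by
    intro j hj φ
    have hne : ¬ ((n : ℤ) ∣ ((l : ℤ) - j)) := by
      have h1 : (j : ℤ) < l := by exact_mod_cast hj
      have h2 : (l : ℤ) < n := by exact_mod_cast Nat.lt_of_succ_le hln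
      exact hnd _ (by omega) (by omega)
    set ψ := (shiftFunctor T (j : ℤ)).preimage
      ((shiftFunctorAdd' T ((l : ℤ) - j) j l (by ring)).inv.app Y ≫ φ) with hψ
    have h0 : ψ = 0 := hU Y hY (X j) (hXU j hj) _ hne ψ
    have h1 : (shiftFunctorAdd' T ((l : ℤ) - j) j l (by ring)).inv.app Y ≫ φ = 0 := by
      rw [← (shiftFunctor T (j : ℤ)).map_preimage
        ((shiftFunctorAdd' T ((l : ℤ) - j) j l (by ring)).inv.app Y ≫ φ), ← hψ, h0,
        Functor.map_zero]
    rw [← cancel_epi ((shiftFunctorAdd' T ((l : ℤ) - j) j l (by ring)).inv.app Y), h1,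
      comp_zero]
  -- every map `X_j⟦j⟧ ⟶ Y⟦-1⟧` is zero
  have key2 : ∀ j, j < l → ∀ ψ : (X j)⟦(j : ℤ)⟧ ⟶ Y⟦(-1 : ℤ)⟧, ψ = 0 := by
    intro j hj ψ
    have hne : ¬ ((n : ℤ) ∣ ((j : ℤ) + 1)) := by
      refine hnd _ (by positivity) ?_
      have h1 : (j : ℤ) < l := by exact_mod_cast hj
      have h2 : (l : ℤ) + 1 ≤ n := by exact_mod_cast hln
      omega
    have h0 : (shiftFunctorAdd' T (j : ℤ) 1 ((j : ℤ) + 1) rfl).hom.app (X j) ≫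
        ψ⟦(1 : ℤ)⟧' ≫ (shiftFunctorCompIsoId T (-1 : ℤ) 1 (by ring)).hom.app Y = 0 :=
      hU (X j) (hXU j hj) Y hY _ hne _
    have h1 : ψ⟦(1 : ℤ)⟧' = 0 := by
      rw [← cancel_epi ((shiftFunctorAdd' T (j : ℤ) 1 ((j : ℤ) + 1) rfl).hom.app (X j)),
        ← cancel_mono ((shiftFunctorCompIsoId T (-1 : ℤ) 1 (by ring)).hom.app Y),
        comp_zero, zero_comp]
      simpa using h0
    exact (shiftFunctor T (1 : ℤ)).map_injective (by rw [h1, Functor.map_zero])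
  have main : ∀ j, j ≤ l →
      (∀ f : Y⟦(l : ℤ)⟧ ⟶ E.F j, f = 0) ∧ (∀ g : E.F j ⟶ Y⟦(-1 : ℤ)⟧, g = 0) := by
    intro j
    induction j with
    | zero =>
      exact fun _ => ⟨fun f => E.isZero_F₀.eq_of_tgt f 0, fun g => E.isZero_F₀.eq_of_src g 0⟩
    | succ j ih =>
      intro hj
      have hjl : j < l := hj
      obtain ⟨ih1, ih2⟩ := ih hjl.le
      constructor
      · intro f
        obtain ⟨g, hg⟩ := Triangle.coyoneda_exact₂ _ (E.dist j hjl) f (key1 j hjl _)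
        rw [hg, ih1 g]; exact zero_comp
      · intro g
        obtain ⟨h, hh⟩ := Triangle.yoneda_exact₂ _ (E.dist j hjl) g (ih2 _)
        rw [hh, key2 j hjl h]; exact comp_zero
  exact main l le_rfl
end

section
/- Let U be an n-split full subcategory of T and let X_l →(λ_l) X_{l−1} →(λ_{l−1}) … →(λ₁) X₀ be a sequence of morphisms between objects of U with λᵢ ∘ λᵢ₊₁ = 0 for 1 ≤ i ≤ l−1. If l ≤ n+1, then there exists an (l+1)-filtered object X ∈ {λ₁,…,λ_l}. -/
open CategoryTheory Category Limits Pretriangulated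

universe v u

variable (T : Type u) [Category.{v} T] [Preadditive T] [HasZeroObject T]
  [HasShift T ℤ] [∀ n : ℤ, Functor.Additive (shiftFunctor T n)] [Pretriangulated T]

section Construction
open ZeroObject
variable {T}

noncomputable def myCone {A Z : T} (h : Z ⟶ A⟦(1 : ℤ)⟧) :
    Σ' (Y : T) (f : A ⟶ Y) (g : Y ⟶ Z), Triangle.mk f g h ∈ distTriang T :=
  ⟨(distinguished_cocone_triangle₂ h).choose,
   (distinguished_cocone_triangle₂ h).choose_spec.choose,
   (distinguished_cocone_triangle₂ h).choose_spec.choose_spec.choose,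
   (distinguished_cocone_triangle₂ h).choose_spec.choose_spec.choose_spec⟩

open Classical in
noncomputable def pick {A B C : T} (g : A ⟶ B) (q : C ⟶ B) : A ⟶ C :=
  if h : ∃ e : A ⟶ C, e ≫ q = g then h.choose else 0

lemma pick_spec {A B C : T} (g : A ⟶ B) (q : C ⟶ B) (h : ∃ e : A ⟶ C, e ≫ q = g) :
    pick g q ≫ q = g := by
  rw [pick, dif_pos h]; exact h.choose_spec

variable (X : ℕ → T) (lam : ∀ j : ℕ, X (j + 1) ⟶ X j)

noncomputable def gmap (j : ℕ) : (X (j + 1))⟦((j + 1 : ℕ) : ℤ)⟧ ⟶ ((X j)⟦(j : ℤ)⟧)⟦(1 : ℤ)⟧ :=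
  (lam j)⟦((j + 1 : ℕ) : ℤ)⟧' ≫
    (shiftFunctorAdd' T (j : ℤ) (1 : ℤ) ((j + 1 : ℕ) : ℤ) (by push_cast; ring)).hom.app (X j)

noncomputable def tower : ∀ m : ℕ, Σ' (A : T), A ⟶ (X m)⟦(m : ℤ)⟧
  | 0 => ⟨(X 0)⟦((0 : ℕ) : ℤ)⟧, 𝟙 _⟩
  | (m + 1) =>
      ⟨(myCone (pick (gmap X lam m) ((tower m).2⟦(1 : ℤ)⟧'))).1,
       (myCone (pick (gmap X lam m) ((tower m).2⟦(1 : ℤ)⟧'))).2.2.1⟩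

noncomputable def Ft : ℕ → T
  | 0 => 0
  | (m + 1) => (tower X lam m).1

noncomputable def iI : ∀ j : ℕ, Ft X lam j ⟶ Ft X lam (j + 1)
  | 0 => 0
  | (m + 1) => (myCone (pick (gmap X lam m) ((tower X lam m).2⟦(1 : ℤ)⟧'))).2.1

noncomputable def pP (j : ℕ) : Ft X lam (j + 1) ⟶ (X j)⟦(j : ℤ)⟧ := (tower X lam j).2

noncomputable def dD : ∀ j : ℕ, (X j)⟦(j : ℤ)⟧ ⟶ (Ft X lam j)⟦(1 : ℤ)⟧
  | 0 => 0
  | (m + 1) => pick (gmap X lam m) ((tower X lam m).2⟦(1 : ℤ)⟧')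

lemma distT : ∀ j : ℕ, Triangle.mk (iI X lam j) (pP X lam j) (dD X lam j) ∈ distTriang T
  | 0 => contractible_distinguished₁ ((X 0)⟦((0 : ℕ) : ℤ)⟧)
  | (m + 1) => (myCone (pick (gmap X lam m) ((tower X lam m).2⟦(1 : ℤ)⟧'))).2.2.2

set_option linter.unusedSectionVars false

lemma not_dvd_of_lt {n : ℕ} {x : ℤ} (h1 : 0 < x) (h2 : x < n) : ¬ (n : ℤ) ∣ x :=
  fun hd => absurd (Int.le_of_dvd h1 hd) (by omega)

lemma hom_shift_zero {n : ℕ} {U : Set T} (hU : IsNSplit T n U) {A B : T}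
    (hA : A ∈ U) (hB : B ∈ U) (k s : ℤ) (h : ¬ (n : ℤ) ∣ (k - s))
    (v : A⟦k⟧ ⟶ B⟦s⟧) : v = 0 := by
  have h' : k - s + s = k := by ring
  set e := (shiftFunctorAdd' T (k - s) s k h').app A with he
  have w0 : (shiftFunctor T s).preimage (e.inv ≫ v) = 0 :=
    hU A hA B hB (k - s) h _
  have hz : e.inv ≫ v = 0 := by
    rw [← (shiftFunctor T s).map_preimage (e.inv ≫ v), w0, Functor.map_zero]
  calc v = e.hom ≫ (e.inv ≫ v) := by rw [Iso.hom_inv_id_assoc]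
    _ = 0 := by rw [hz, comp_zero]

lemma vanish {n l : ℕ} {U : Set T} (hU : IsNSplit T n U)
    (hXU : ∀ j, j ≤ l → X j ∈ U) :
    ∀ t : ℕ, t ≤ l → ∀ w : ℕ, w ≤ l → ∀ k : ℤ,
      (∀ s : ℕ, 1 ≤ s → s ≤ t → ¬ (n : ℤ) ∣ (k - s)) →
      ∀ u : (X w)⟦k⟧ ⟶ (Ft X lam t)⟦(1 : ℤ)⟧, u = 0 := by
  intro t
  induction t with
  | zero =>
      intro _ w _ k _ u
      exact IsZero.eq_of_tgt (Functor.map_isZero _ (isZero_zero T)) u 0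
  | succ m ih =>
      intro ht w hw k hk u
      have hcast : ((m : ℤ)) + 1 = ((m + 1 : ℕ) : ℤ) := by push_cast; ring
      set φ := (shiftFunctorAdd' T (m : ℤ) (1 : ℤ) ((m + 1 : ℕ) : ℤ) hcast).app (X m) with hφ
      have h1 : u ≫ (pP X lam m)⟦(1 : ℤ)⟧' = 0 := by
        have hz : (u ≫ (pP X lam m)⟦(1 : ℤ)⟧') ≫ φ.inv = 0 := by
          refine hom_shift_zero hU (hXU w hw) (hXU m (by omega)) k ((m + 1 : ℕ) : ℤ) ?_ _
          exact hk (m + 1) (by omega) (le_refl _)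
        calc u ≫ (pP X lam m)⟦(1 : ℤ)⟧'
            = ((u ≫ (pP X lam m)⟦(1 : ℤ)⟧') ≫ φ.inv) ≫ φ.hom := by
              rw [assoc, Iso.inv_hom_id, comp_id]
          _ = 0 := by rw [hz, zero_comp]
      have hdist : (Triangle.shiftFunctor T (1 : ℤ)).obj
          (Triangle.mk (iI X lam m) (pP X lam m) (dD X lam m)) ∈ distTriang T :=
        Triangle.shift_distinguished _ (distT X lam m) 1
      obtain ⟨r, hr⟩ := Triangle.coyoneda_exact₂ _ hdist u (by
        show u ≫ ((1 : ℤ).negOnePow • (pP X lam m)⟦(1 : ℤ)⟧') = 0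
        rw [Linear.comp_units_smul, h1, smul_zero])
      have hr0 : r = 0 := ih (by omega) w hw k (fun s hs1 hs2 => hk s hs1 (by omega)) r
      rw [hr, hr0]; exact zero_comp

lemma comm_all {n l : ℕ} {U : Set T} (hU : IsNSplit T n U) (hl : l ≤ n + 1)
    (hXU : ∀ j, j ≤ l → X j ∈ U)
    (hcomp : ∀ j, j + 2 ≤ l → lam (j + 1) ≫ lam j = 0) :
    ∀ j : ℕ, j + 2 ≤ l + 1 →
      dD X lam (j + 1) ≫ (pP X lam j)⟦(1 : ℤ)⟧' = gmap X lam j := by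
  intro j
  induction j with
  | zero =>
      intro _
      show pick (gmap X lam 0) ((tower X lam 0).2⟦(1 : ℤ)⟧') ≫
        ((tower X lam 0).2)⟦(1 : ℤ)⟧' = gmap X lam 0
      refine pick_spec _ _ ⟨gmap X lam 0, ?_⟩
      show gmap X lam 0 ≫ (𝟙 ((X 0)⟦((0 : ℕ) : ℤ)⟧))⟦(1 : ℤ)⟧' = gmap X lam 0
      rw [CategoryTheory.Functor.map_id, comp_id]
  | succ m ih =>
      intro h
      show pick (gmap X lam (m + 1)) ((tower X lam (m + 1)).2⟦(1 : ℤ)⟧') ≫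
        ((tower X lam (m + 1)).2)⟦(1 : ℤ)⟧' = gmap X lam (m + 1)
      apply pick_spec
      -- Step A
      have hA : (lam (m + 1))⟦((m + 1 : ℕ) : ℤ)⟧' ≫ dD X lam (m + 1) = 0 := by
        have hq0 : ((lam (m + 1))⟦((m + 1 : ℕ) : ℤ)⟧' ≫ dD X lam (m + 1)) ≫
            (pP X lam m)⟦(1 : ℤ)⟧' = 0 := by
          rw [assoc, ih (by omega), gmap, ← assoc, ← Functor.map_comp,
            hcomp m (by omega), Functor.map_zero, zero_comp]
        have hdist : (Triangle.shiftFunctor T (1 : ℤ)).obj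
            (Triangle.mk (iI X lam m) (pP X lam m) (dD X lam m)) ∈ distTriang T :=
          Triangle.shift_distinguished _ (distT X lam m) 1
        obtain ⟨r, hr⟩ := Triangle.coyoneda_exact₂ _ hdist
          ((lam (m + 1))⟦((m + 1 : ℕ) : ℤ)⟧' ≫ dD X lam (m + 1)) (by
            show ((lam (m + 1))⟦((m + 1 : ℕ) : ℤ)⟧' ≫ dD X lam (m + 1)) ≫
              ((1 : ℤ).negOnePow • (pP X lam m)⟦(1 : ℤ)⟧') = 0
            rw [Linear.comp_units_smul, hq0, smul_zero])
        have hr0 : r = 0 := by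
          refine vanish X lam hU hXU m (by omega) (m + 2) (by omega) ((m + 1 : ℕ) : ℤ)
            (fun s hs1 hs2 => not_dvd_of_lt (by push_cast; omega) (by push_cast; omega)) r
        exact hr.trans (by rw [hr0]; exact zero_comp)
      -- Step B
      have hB : gmap X lam (m + 1) ≫ (dD X lam (m + 1))⟦(1 : ℤ)⟧' = 0 := by
        rw [gmap, assoc, ← assoc ((lam (m + 1))⟦((m + 1 + 1 : ℕ) : ℤ)⟧'),
          (shiftFunctorAdd' T ((m + 1 : ℕ) : ℤ) (1 : ℤ) ((m + 1 + 1 : ℕ) : ℤ)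
            (by push_cast; ring)).hom.naturality (lam (m + 1)), assoc, Functor.comp_map,
          ← Functor.map_comp, hA, Functor.map_zero, comp_zero]
      -- Step C
      have hdist : (Triangle.shiftFunctor T (1 : ℤ)).obj
          (Triangle.mk (iI X lam (m + 1)) (pP X lam (m + 1)) (dD X lam (m + 1))) ∈ distTriang T :=
        Triangle.shift_distinguished _ (distT X lam (m + 1)) 1
      obtain ⟨e, he⟩ := Triangle.coyoneda_exact₃ _ hdist (gmap X lam (m + 1)) (by
        show gmap X lam (m + 1) ≫ ((1 : ℤ).negOnePow • (dD X lam (m + 1))⟦(1 : ℤ)⟧' ≫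
          (shiftFunctorComm T 1 1).hom.app _) = 0
        rw [Linear.comp_units_smul, ← assoc, hB, zero_comp, smul_zero])
      have he' : gmap X lam (m + 1) =
          (1 : ℤ).negOnePow • (e ≫ (pP X lam (m + 1))⟦(1 : ℤ)⟧') := by
        rw [he]; show e ≫ ((1 : ℤ).negOnePow • (pP X lam (m + 1))⟦(1 : ℤ)⟧') = _; exact Linear.comp_units_smul ..
      refine ⟨(1 : ℤ).negOnePow • e, ?_⟩
      show ((1 : ℤ).negOnePow • e) ≫ (pP X lam (m + 1))⟦(1 : ℤ)⟧' = _
      exact (Linear.units_smul_comp ..).trans he'.symm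

end Construction

/-- let `U` be an `n`-split full subcategory of `T` and let
`X_l ⟶(λ_l) ⋯ ⟶(λ₁) X₀` be a sequence of maps between objects of `U` with
`λᵢ ∘ λᵢ₊₁ = 0` for `1 ≤ i ≤ l-1`. If `l ≤ n+1`, then there exists an
`(l+1)`-filtered object `X ∈ {λ₁, …, λ_l}`. -/
theorem filteredObj_exists (n : ℕ) (U : Set T) (hU : IsNSplit T n U)
    (l : ℕ) (hl : l ≤ n + 1)
    (X : ℕ → T) (lam : ∀ j : ℕ, X (j + 1) ⟶ X j)
    (hXU : ∀ j, j ≤ l → X j ∈ U)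
    (hcomp : ∀ j, j + 2 ≤ l → lam (j + 1) ≫ lam j = 0) :
    Nonempty (FilteredObj T (l + 1) X lam) := by
  refine ⟨{
    F := Ft X lam
    isZero_F₀ := isZero_zero T
    i := iI X lam
    p := pP X lam
    d := dD X lam
    dist := fun j _ => distT X lam j
    comm := fun j hj => comm_all X lam hU hl hXU hcomp j hj
    sig := (shiftFunctorZero' T ((0 : ℕ) : ℤ) (by simp)).inv.app (X 0)
    sig_p := ?_ }⟩
  show _ ≫ (tower X lam 0).2 = _
  show (shiftFunctorZero' T ((0 : ℕ) : ℤ) (by simp)).inv.app (X 0) ≫ 𝟙 ((X 0)⟦((0 : ℕ) : ℤ)⟧) = _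
  rw [comp_id]
end

section
/- Let U be an n-split full subcategory of T and let X_l →(λ_l) X_{l−1} →(λ_{l−1}) … →(λ₁) X₀ be a sequence of morphisms between objects of U with λᵢ ∘ λᵢ₊₁ = 0 for 1 ≤ i ≤ l−1. If l ≤ n, then any two (l+1)-filtered objects X, X' ∈ {λ₁,…,λ_l} are isomorphic compatibly with their filtrations: there exist isomorphisms f_j : F_jX → F_jX' for 0 ≤ j ≤ l+1 such that f_{j+1} ∘ i_j = i'_j ∘ f_j, p'_{j+1} ∘ f_{j+1} = p_{j+1}, and d'_j = (f_j⟦1⟧) ∘ d_j for all j. -/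
open CategoryTheory Category Limits Pretriangulated

universe v u

variable (T : Type u) [Category.{v} T] [Preadditive T] [HasZeroObject T]
  [HasShift T ℤ] [∀ n : ℤ, Functor.Additive (shiftFunctor T n)] [Pretriangulated T]

/-- let `U` be an `n`-split full subcategory of `T` and let
`X_l ⟶(λ_l) ⋯ ⟶(λ₁) X₀` be a sequence of maps between objects of `U` with
`λᵢ ∘ λᵢ₊₁ = 0`. If `l ≤ n`, then any two `(l+1)`-filtered objects
`X, X' ∈ {λ₁, …, λ_l}` are isomorphic compatibly with their filtrations: there
exist isomorphisms `f_j : F_jX ≅ F_jX'` for `0 ≤ j ≤ l+1` such that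
`f_{j+1} ∘ i_j = i'_j ∘ f_j`, `p'_{j+1} ∘ f_{j+1} = p_{j+1}` and
`d'_j = (f_j⟦1⟧) ∘ d_j` for all `0 ≤ j ≤ l`. -/
theorem filteredObj_unique (n : ℕ) (U : Set T) (hU : IsNSplit T n U)
    (l : ℕ) (hl : l ≤ n)
    (X : ℕ → T) (lam : ∀ j : ℕ, X (j + 1) ⟶ X j)
    (hXU : ∀ j, j ≤ l → X j ∈ U)
    (hcomp : ∀ j, j + 2 ≤ l → lam (j + 1) ≫ lam j = 0)
    (E E' : FilteredObj T (l + 1) X lam) :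
    ∃ f : ∀ j, j ≤ l + 1 → (E.F j ≅ E'.F j),
      (∀ j (hj : j ≤ l),
        E.i j ≫ (f (j + 1) (Nat.succ_le_succ hj)).hom
          = (f j (le_trans hj (Nat.le_succ l))).hom ≫ E'.i j) ∧
      (∀ j (hj : j ≤ l),
        (f (j + 1) (Nat.succ_le_succ hj)).hom ≫ E'.p j = E.p j) ∧
      (∀ j (hj : j ≤ l),
        E'.d j = E.d j ≫ ((f j (le_trans hj (Nat.le_succ l))).hom)⟦(1 : ℤ)⟧') := by
  classical
  -- Splitness: any map `A⟦a⟧ ⟶ B⟦b⟧` vanishes if `n ∤ a - b`.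
  have hsplit : ∀ (A B : T), A ∈ U → B ∈ U → ∀ a b : ℤ, ¬ ((n : ℤ) ∣ (a - b)) →
      ∀ g : A⟦a⟧ ⟶ B⟦b⟧, g = 0 := by
    intro A B hA hB a b hnd g
    obtain ⟨h', hh'⟩ := (shiftFunctor T b).map_surjective
      ((shiftFunctorAdd' T (a - b) b a (by ring)).inv.app A ≫ g)
    have h0 : h' = 0 := hU A hA B hB (a - b) hnd h'
    rw [h0, Functor.map_zero] at hh'
    have hg : g = (shiftFunctorAdd' T (a - b) b a (by ring)).hom.app A ≫
        ((shiftFunctorAdd' T (a - b) b a (by ring)).inv.app A ≫ g) := by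
      rw [Iso.hom_inv_id_app_assoc]
    rw [hg, ← hh', comp_zero]
  -- integers strictly between 0 and n are not divisible by n
  have hnd : ∀ (a b : ℤ), 0 < a - b → a - b < n → ¬ ((n : ℤ) ∣ (a - b)) := by
    intro a b h1 h2 hdvd
    have := Int.le_of_dvd h1 hdvd
    omega
  -- Vanishing of maps `X_j⟦j⟧ ⟶ (F_k X')⟦1⟧` for `k < j ≤ l`.
  have hzero : ∀ (j : ℕ), j ≤ l → ∀ (k : ℕ), k < j →
      ∀ g : (X j)⟦(j : ℤ)⟧ ⟶ (E'.F k)⟦(1 : ℤ)⟧, g = 0 := by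
    intro j hj k
    induction k with
    | zero =>
      intro _ g
      have hz : IsZero ((E'.F 0)⟦(1 : ℤ)⟧) := (shiftFunctor T (1 : ℤ)).map_isZero E'.isZero_F₀
      exact hz.eq_of_tgt g 0
    | succ m ihm =>
      intro hk g
      have h1 : g ≫ (E'.p m)⟦(1 : ℤ)⟧' = 0 := by
        have h2 : (g ≫ (E'.p m)⟦(1 : ℤ)⟧') ≫
            (shiftFunctorAdd' T (m : ℤ) 1 ((m : ℤ) + 1) rfl).inv.app (X m) = 0 := by
          refine hsplit (X j) (X m) (hXU j hj) (hXU m (by omega)) (j : ℤ) ((m : ℤ) + 1)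
            (hnd _ _ (by push_cast; omega) (by push_cast; omega)) _
        have h3 : g ≫ (E'.p m)⟦(1 : ℤ)⟧' = ((g ≫ (E'.p m)⟦(1 : ℤ)⟧') ≫
            (shiftFunctorAdd' T (m : ℤ) 1 ((m : ℤ) + 1) rfl).inv.app (X m)) ≫
            (shiftFunctorAdd' T (m : ℤ) 1 ((m : ℤ) + 1) rfl).hom.app (X m) := by
          rw [assoc, Iso.inv_hom_id_app]
          exact (comp_id _).symm
        rw [h3, h2, zero_comp]
      obtain ⟨h, hh⟩ := Pretriangulated.Triangle.coyoneda_exact₁ _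
        (rot_of_distTriang _ (E'.dist m (by omega))) g h1
      have h0 : h = 0 := ihm (by omega) h
      rw [hh, h0, zero_comp]
      rfl
  -- `d`-compatibility in degree `0`
  have hd0 : ∀ (φ : E.F 0 ⟶ E'.F 0), E'.d 0 = E.d 0 ≫ φ⟦(1 : ℤ)⟧' := by
    intro φ
    have hz : IsZero ((E'.F 0)⟦(1 : ℤ)⟧) := (shiftFunctor T (1 : ℤ)).map_isZero E'.isZero_F₀
    exact hz.eq_of_tgt _ _
  -- `d`-compatibility in degree `k+1` from `p`-compatibility in degree `k`
  have hdS : ∀ (k : ℕ) (_ : k + 1 ≤ l) (φ : E.F (k + 1) ⟶ E'.F (k + 1)),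
      φ ≫ E'.p k = E.p k → E'.d (k + 1) = E.d (k + 1) ≫ φ⟦(1 : ℤ)⟧' := by
    intro k hk φ hφ
    have hδ : (E'.d (k + 1) - E.d (k + 1) ≫ φ⟦(1 : ℤ)⟧') ≫ (E'.p k)⟦(1 : ℤ)⟧' = 0 := by
      rw [Preadditive.sub_comp, assoc, ← Functor.map_comp, hφ, E'.comm k (by omega), E.comm k (by omega),
        sub_self]
    obtain ⟨ε, hε⟩ := Pretriangulated.Triangle.coyoneda_exact₁ _
      (rot_of_distTriang _ (E'.dist k (by omega)))
      (E'.d (k + 1) - E.d (k + 1) ≫ φ⟦(1 : ℤ)⟧') hδ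
    have hε0 : ε = 0 := hzero (k + 1) hk k (by omega) ε
    rw [hε0, zero_comp] at hε
    exact sub_eq_zero.mp hε
  -- construction of the next isomorphism
  have step : ∀ (j : ℕ) (_ : j ≤ l) (φ : E.F j ≅ E'.F j)
      (_ : E'.d j = E.d j ≫ φ.hom⟦(1 : ℤ)⟧'),
      ∃ ψ : E.F (j + 1) ≅ E'.F (j + 1),
        E.i j ≫ ψ.hom = φ.hom ≫ E'.i j ∧ ψ.hom ≫ E'.p j = E.p j := by
    intro j hj φ hφ
    obtain ⟨b, hb1, hb2⟩ := Pretriangulated.complete_distinguished_triangle_morphism₂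
      (Triangle.mk (E.i j) (E.p j) (E.d j)) (Triangle.mk (E'.i j) (E'.p j) (E'.d j))
      (E.dist j (by omega)) (E'.dist j (by omega)) φ.hom (𝟙 _)
      (by change E.d j ≫ φ.hom⟦(1 : ℤ)⟧' = 𝟙 ((X j)⟦(j : ℤ)⟧) ≫ E'.d j; rw [id_comp, hφ])
    change E.i j ≫ b = φ.hom ≫ E'.i j at hb1
    change E.p j ≫ 𝟙 ((X j)⟦(j : ℤ)⟧) = b ≫ E'.p j at hb2
    rw [comp_id] at hb2
    have : IsIso b := by
      have := Pretriangulated.isIso₂_of_isIso₁₃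
        (Pretriangulated.Triangle.homMk (Triangle.mk (E.i j) (E.p j) (E.d j))
          (Triangle.mk (E'.i j) (E'.p j) (E'.d j)) φ.hom b (𝟙 _) hb1
          (by change E.p j ≫ 𝟙 ((X j)⟦(j : ℤ)⟧) = b ≫ E'.p j; rw [comp_id]; exact hb2) (by change E.d j ≫ φ.hom⟦(1 : ℤ)⟧' = 𝟙 ((X j)⟦(j : ℤ)⟧) ≫ E'.d j; rw [id_comp, hφ]))
        (E.dist j (by omega)) (E'.dist j (by omega)) (by change IsIso φ.hom; infer_instance)
        (by change IsIso (𝟙 ((X j)⟦(j : ℤ)⟧)); infer_instance)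
      exact this
    exact ⟨@asIso _ _ _ _ b this, hb1, hb2.symm⟩
  -- the main induction constructing the family of isomorphisms
  have main : ∀ (j : ℕ), j ≤ l + 1 → ∃ f : ∀ k, k ≤ j → (E.F k ≅ E'.F k),
      (∀ k (hk : k + 1 ≤ j), E.i k ≫ (f (k + 1) hk).hom
        = (f k (le_trans (Nat.le_succ k) hk)).hom ≫ E'.i k) ∧
      (∀ k (hk : k + 1 ≤ j), (f (k + 1) hk).hom ≫ E'.p k = E.p k) := by
    intro j
    induction j with
    | zero =>
      intro _
      refine ⟨fun k hk => by
        obtain rfl : k = 0 := by omega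
        exact E.isZero_F₀.iso E'.isZero_F₀, fun k hk => absurd hk (by omega),
        fun k hk => absurd hk (by omega)⟩
    | succ j ih =>
      intro hj1
      obtain ⟨f, hfi, hfp⟩ := ih (by omega)
      have hj : j ≤ l := by omega
      -- d-compatibility for `f j`
      have hdj : E'.d j = E.d j ≫ (f j le_rfl).hom⟦(1 : ℤ)⟧' := by
        match j, hj, f, hfp with
        | 0, _, f, _ => exact hd0 _
        | (k + 1), hj, f, hfp => exact hdS k hj _ (hfp k le_rfl)
      obtain ⟨ψ, hψi, hψp⟩ := step j hj (f j le_rfl) hdj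
      refine ⟨fun k hk => if h : k = j + 1 then h ▸ ψ else f k (by omega), ?_, ?_⟩
      · intro k hk
        by_cases h : k + 1 = j + 1
        · obtain rfl : k = j := by omega
          dsimp only
          rw [dif_pos rfl, dif_neg (by omega : ¬ k = k + 1)]
          exact hψi
        · dsimp only
          rw [dif_neg h, dif_neg (by omega)]
          exact hfi k (by omega)
      · intro k hk
        by_cases h : k + 1 = j + 1
        · obtain rfl : k = j := by omega
          dsimp only
          rw [dif_pos rfl]
          exact hψp
        · dsimp only
          rw [dif_neg h]
          exact hfp k (by omega)
  obtain ⟨f, hfi, hfp⟩ := main (l + 1) le_rfl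
  refine ⟨fun j hj => f j hj, fun j hj => hfi j (by omega), fun j hj => hfp j (by omega), ?_⟩
  intro j hj
  match j, hj with
  | 0, _ => exact hd0 _
  | (k + 1), hj => exact hdS k hj _ (hfp k (by omega))
end
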